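/- arXiv:1806.00882 — 3 statements merged into one kernel-verified Lean document; each statement's English description precedes it below -/
import Mathlib

section
/- Let G be an MVR chain graph on V and let C = {C1,…,CH} be a hypergraph on V such that for every chain component τ of G there is a hyperedge C_h with τ ∪ pa_G(τ) ⊆ C_h. Let Ḡ_V be the undirected graph on V whose edge set is the union over h of the edge sets of the complete graphs on the C_h. Then every edge of the augmented graph (G)^a is an edge of Ḡ_V. -/
namespace MVR

universe u v

/-- A mixed graph with directed (`dir u v` means `u → v`) and bidirected
(`bi u v` means `u ↔ v`) edges between distinct vertices. -/
structure MixedGraph (V : Type u) where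
  dir : V → V → Prop
  bi : V → V → Prop
  bi_symm : ∀ ⦃u v : V⦄, bi u v → bi v u
  dir_irrefl : ∀ v : V, ¬ dir v v
  bi_irrefl : ∀ v : V, ¬ bi v v

namespace MixedGraph

variable {V : Type u}

/-- Two vertices are adjacent if they are joined by a directed or bidirected edge. -/
def Adjacent (G : MixedGraph V) (u v : V) : Prop :=
  G.dir u v ∨ G.dir v u ∨ G.bi u v

/-- `u` is an ancestor of `v`: there is a directed path `u → ⋯ → v`. -/
def IsAncestor (G : MixedGraph V) (u v : V) : Prop :=
  Relation.TransGen G.dir u v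

/-- `an(X)`: the set of ancestors of vertices in `X`. -/
def anc (G : MixedGraph V) (X : Set V) : Set V :=
  {a | ∃ x ∈ X, G.IsAncestor a x}

/-- `An(X) = an(X) ∪ X`. -/
def Anc (G : MixedGraph V) (X : Set V) : Set V :=
  G.anc X ∪ X

/-- The boundary `bd(u)`: vertices `v` with `v → u` or `v ↔ u`. -/
def bd (G : MixedGraph V) (u : V) : Set V :=
  {v | G.dir v u ∨ G.bi v u}

/-- A partially directed cycle: distinct vertices `f 0, …, f (n-1)` (`n ≥ 3`), read
cyclically, every consecutive pair joined by a directed or bidirected edge, with at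
least one directed edge. -/
def IsPartiallyDirectedCycle (G : MixedGraph V) (n : ℕ) (f : ℕ → V) : Prop :=
  3 ≤ n ∧ (∀ i < n, ∀ j < n, f i = f j → i = j) ∧
  (∀ i < n, G.dir (f i) (f ((i + 1) % n)) ∨ G.bi (f i) (f ((i + 1) % n))) ∧
  (∃ i < n, G.dir (f i) (f ((i + 1) % n)))

/-- An MVR chain graph is a mixed graph with no partially directed cycles. -/
def IsMVRChainGraph (G : MixedGraph V) : Prop :=
  ∀ (n : ℕ) (f : ℕ → V), ¬ G.IsPartiallyDirectedCycle n f

/-- A chain (mixed walk) in a mixed graph: each step uses `a → b`, `a ← b` or `a ↔ b`. -/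
inductive Chain (G : MixedGraph V) : V → V → Type u
  | nil (a : V) : Chain G a a
  | fwd {a b c : V} (h : G.dir a b) (p : Chain G b c) : Chain G a c
  | rev {a b c : V} (h : G.dir b a) (p : Chain G b c) : Chain G a c
  | bid {a b c : V} (h : G.bi a b) (p : Chain G b c) : Chain G a c

variable {G : MixedGraph V}

/-- The list of vertices of a chain. -/
def Chain.support {a b : V} (p : G.Chain a b) : List V :=
  match p with
  | .nil _ => [a]
  | .fwd _ q => a :: q.support
  | .rev _ q => a :: q.support
  | .bid _ q => a :: q.support

/-- For each edge of the chain its pair of arrowhead marks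
`(arrowhead at left endpoint, arrowhead at right endpoint)`. -/
def Chain.marks {a b : V} (p : G.Chain a b) : List (Bool × Bool) :=
  match p with
  | .nil _ => []
  | .fwd _ q => (false, true) :: q.marks
  | .rev _ q => (true, false) :: q.marks
  | .bid _ q => (true, true) :: q.marks

/-- The internal vertex lying between edges `i` and `i+1` of the chain (i.e. the vertex
at position `i+1` of the support) is a collider: both incident edges have an arrowhead
at it. -/
def Chain.ColliderAt {a b : V} (p : G.Chain a b) (i : ℕ) : Prop :=
  ∃ m₁ m₂ : Bool × Bool, p.marks[i]? = some m₁ ∧ p.marks[i + 1]? = some m₂ ∧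
    m₁.2 = true ∧ m₂.1 = true

/-- A chain is m-connecting given `Z` if every internal noncollider is not in `Z` and
every internal collider is in `An(Z)`. -/
def Chain.MConnecting {a b : V} (p : G.Chain a b) (Z : Set V) : Prop :=
  ∀ (i : ℕ) (w : V), p.support[i + 1]? = some w → i + 2 < p.support.length →
    (p.ColliderAt i → w ∈ G.Anc Z) ∧ (¬ p.ColliderAt i → w ∉ Z)

/-- A chain is blocked by `Z` if it is not m-connecting given `Z`. -/
def Chain.Blocked {a b : V} (p : G.Chain a b) (Z : Set V) : Prop :=
  ¬ p.MConnecting Z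

/-- Vertices `u` and `v` are m-separated by `Z`: every chain (sequence of distinct
vertices) between them is blocked by `Z`. -/
def MSeparated (G : MixedGraph V) (u v : V) (Z : Set V) : Prop :=
  ∀ p : G.Chain u v, p.support.Nodup → p.Blocked Z

/-- Sets `X` and `Y` are m-separated by `Z`. -/
def MSeparatedSets (G : MixedGraph V) (X Y Z : Set V) : Prop :=
  ∀ u ∈ X, ∀ v ∈ Y, G.MSeparated u v Z

/-- The undirected graph on `V` whose edges are the bidirected edges of `G`. -/
def biGraph (G : MixedGraph V) : SimpleGraph V where
  Adj a b := G.bi a b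
  symm := ⟨fun _ _ h => G.bi_symm h⟩
  loopless := ⟨fun a h => G.bi_irrefl a h⟩

/-- `τ` is a chain component of `G`: a connected component of the bidirected part. -/
def IsChainComponent (G : MixedGraph V) (τ : Set V) : Prop :=
  ∃ a : V, τ = {w | G.biGraph.Reachable a w}

/-- The parent set `pa_G(τ)` of a set of vertices `τ`. -/
def paSet (G : MixedGraph V) (τ : Set V) : Set V :=
  {a | a ∉ τ ∧ ∃ w ∈ τ, G.dir a w}

/-- `u` and `v` are collider connected: there is a chain (with distinct vertices)
from `u` to `v` on which every nonendpoint vertex is a collider. -/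
def ColliderConnected (G : MixedGraph V) (u v : V) : Prop :=
  ∃ p : G.Chain u v, p.support.Nodup ∧
    ∀ i : ℕ, i + 2 < p.support.length → p.ColliderAt i

/-- `T` with node-sets `C` is an m-separation tree for `G`: `T` is a tree, the nodes
cover `V`, and for every edge `(i, j)` of `T`, with separator `S = C i ∩ C j` and
`V₁`, `V₂` the unions of the node sets of the two subtrees obtained by deleting the
edge, the sets `V₁ \ S` and `V₂ \ S` are m-separated by `S` in `G`. -/
def IsMSepTree (G : MixedGraph V) {ι : Type v} (T : SimpleGraph ι) (C : ι → Set V) :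
    Prop :=
  T.IsTree ∧ (⋃ i, C i) = Set.univ ∧
  ∀ i j : ι, T.Adj i j →
    G.MSeparatedSets
      ((⋃ k ∈ {k : ι | (T.deleteEdges {s(i, j)}).Reachable i k}, C k) \ (C i ∩ C j))
      ((⋃ k ∈ {k : ι | (T.deleteEdges {s(i, j)}).Reachable j k}, C k) \ (C i ∩ C j))
      (C i ∩ C j)

end MixedGraph

/-- An undirected graph is triangulated (chordal) if every cycle of length at least 4
has a chord. -/
def IsChordal {W : Type u} (H : SimpleGraph W) : Prop :=
  ∀ (a : W) (c : H.Walk a a), c.IsCycle → 4 ≤ c.length →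
    ∃ x y : W, x ∈ c.support ∧ y ∈ c.support ∧ H.Adj x y ∧ s(x, y) ∉ c.edges

/-- `s` is a maximal clique of `H`. -/
def IsMaxClique {W : Type u} (H : SimpleGraph W) (s : Set W) : Prop :=
  H.IsClique s ∧ ∀ t : Set W, H.IsClique t → s ⊆ t → t = s

/-- `(T, C)` is a junction tree constructed from the undirected graph `H`:
`T` is a tree whose nodes `C i` are exactly the (maximal) cliques of some triangulated
supergraph `Ht` of `H`, satisfying the junction property. -/
def IsJunctionTreeFor {W : Type u} {ι : Type v} (T : SimpleGraph ι) (C : ι → Set W)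
    (H : SimpleGraph W) : Prop :=
  T.IsTree ∧
  ∃ Ht : SimpleGraph W, H ≤ Ht ∧ IsChordal Ht ∧
    Function.Injective C ∧
    (∀ i : ι, IsMaxClique Ht (C i)) ∧
    (∀ s : Set W, IsMaxClique Ht s → ∃ i : ι, C i = s) ∧
    (∀ (i j : ι) (p : T.Walk i j), p.IsPath → ∀ k ∈ p.support, C i ∩ C j ⊆ C k)

/-- In an undirected graph `H`, `Z` separates `X` and `Y`: every path between a vertex
of `X` and a vertex of `Y` passes through `Z`. -/
def USeparates {W : Type u} (H : SimpleGraph W) (X Y Z : Set W) : Prop :=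
  ∀ u ∈ X, ∀ v ∈ Y, ∀ p : H.Walk u v, p.IsPath → ∃ z ∈ Z, z ∈ p.support

/-- `H` is an undirected independence graph (UIG) for the mixed graph `G`: whenever a
set `Z` separates (nonempty, pairwise disjoint) `X` and `Y` in `H`, `Z` m-separates
`X` and `Y` in `G`. -/
def IsUIG {W : Type u} (H : SimpleGraph W) (G : MixedGraph W) : Prop :=
  ∀ X Y Z : Set W, X.Nonempty → Y.Nonempty → Disjoint X Y → Disjoint X Z →
    Disjoint Y Z → USeparates H X Y Z → G.MSeparatedSets X Y Z

end MVR

/-! On a collider chain every internal vertex carries an arrowhead from both sides, so all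
internal edges are bidirected and the internal vertices lie in one chain component `τ`.
The two end edges either are bidirected or point into `τ`, so both endpoints lie in
`τ ∪ pa_G(τ)`, which by hypothesis sits inside a hyperedge. -/

namespace MVR
namespace MixedGraph

variable {V : Type*} {G : MixedGraph V}

def component (G : MixedGraph V) (a : V) : Set V :=
  {w | G.biGraph.Reachable a w}

lemma isChainComponent_component (a : V) : G.IsChainComponent (G.component a) :=
  ⟨a, rfl⟩

lemma mem_union_paSet_of_dir {τ : Set V} {x d : V} (hd : d ∈ τ) (hdir : G.dir x d) :
    x ∈ τ ∪ G.paSet τ := by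
  by_cases hx : x ∈ τ
  · exact Or.inl hx
  · exact Or.inr ⟨hx, d, hd, hdir⟩

namespace Chain

def IsColliderChain {a b : V} (p : G.Chain a b) : Prop :=
  p.marks.IsChain fun m₁ m₂ => m₁.2 = true ∧ m₂.1 = true

lemma length_support {a b : V} (p : G.Chain a b) :
    p.support.length = p.marks.length + 1 := by
  induction p <;> simp [support, marks, *]

lemma isColliderChain_iff {a b : V} (p : G.Chain a b) :
    p.IsColliderChain ↔ ∀ i : ℕ, i + 2 < p.support.length → p.ColliderAt i := by
  rw [IsColliderChain, List.isChain_iff_getElem, length_support]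
  refine forall_congr' fun i => ⟨fun h hi => ?_, fun h hi => ?_⟩
  · exact ⟨_, _, List.getElem?_eq_getElem (by omega), List.getElem?_eq_getElem (by omega),
      h (by omega)⟩
  · obtain ⟨m₁, m₂, h₁, h₂, hm₁, hm₂⟩ := h (by omega)
    rw [List.getElem?_eq_getElem (by omega), Option.some_inj] at h₁
    rw [List.getElem?_eq_getElem hi, Option.some_inj] at h₂
    exact ⟨h₁ ▸ hm₁, h₂ ▸ hm₂⟩

/-- The first clause is the strengthening that lets the induction pass a leading `a → b`. -/
lemma exists_component_of_isColliderChain {a b : V} (p : G.Chain a b)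
    (hp : p.IsColliderChain) :
    ∃ x, ((∀ m ∈ p.marks.head?, m.1 = true) → a ∈ G.component x) ∧
      a ∈ G.component x ∪ G.paSet (G.component x) ∧
      b ∈ G.component x ∪ G.paSet (G.component x) := by
  induction p with
  | nil a => exact ⟨a, fun _ => .refl a, Or.inl (.refl a), Or.inl (.refl a)⟩
  | fwd h q ih =>
    rw [IsColliderChain, marks, List.isChain_cons] at hp
    obtain ⟨x, hstart, -, hend⟩ := ih hp.2
    have hb : _ ∈ G.component x := hstart fun m hm => (hp.1 m hm).2
    exact ⟨x, by simp [marks], mem_union_paSet_of_dir hb h, hend⟩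
  | @rev a _ _ h q =>
    cases q with
    | nil => exact ⟨a, fun _ => .refl a, Or.inl (.refl a), mem_union_paSet_of_dir (.refl a) h⟩
    | _ => simp [IsColliderChain, marks] at hp
  | bid h q ih =>
    rw [IsColliderChain, marks, List.isChain_cons] at hp
    obtain ⟨x, hstart, -, hend⟩ := ih hp.2
    have ha : _ ∈ G.component x :=
      (hstart fun m hm => (hp.1 m hm).2).trans (SimpleGraph.Adj.reachable (G.bi_symm h))
    exact ⟨x, fun _ => ha, Or.inl ha, hend⟩

end Chain

lemma ColliderConnected.exists_chainComponent {u v : V} (huv : G.ColliderConnected u v) :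
    ∃ τ, G.IsChainComponent τ ∧ u ∈ τ ∪ G.paSet τ ∧ v ∈ τ ∪ G.paSet τ := by
  obtain ⟨p, -, hcol⟩ := huv
  obtain ⟨x, -, hu, hv⟩ :=
    p.exists_component_of_isColliderChain (p.isColliderChain_iff.2 hcol)
  exact ⟨_, isChainComponent_component x, hu, hv⟩

end MixedGraph
end MVR

theorem MVR.augmented_edges_subset_hypergraph_union_general
    {V : Type} {ι : Type}
    (G : MVR.MixedGraph V)
    (C : ι → Set V)
    (hpar : ∀ τ : Set V, G.IsChainComponent τ → ∃ h : ι, τ ∪ G.paSet τ ⊆ C h)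
    (u v : V) (hcc : G.ColliderConnected u v) :
    ∃ h : ι, u ∈ C h ∧ v ∈ C h := by
  obtain ⟨τ, hτ, hu, hv⟩ := hcc.exists_chainComponent
  obtain ⟨h, hsub⟩ := hpar τ hτ
  exact ⟨h, hsub hu, hsub hv⟩

/-- Let `C` be a hypergraph on `V` such that every chain component `τ` of
the MVR chain graph `G` together with `pa_G(τ)` is contained in some hyperedge.  Then
every edge of the augmented graph `(G)ᵃ` (i.e. every pair of distinct collider-connected
vertices) joins two vertices lying in a common hyperedge, hence is an edge of the union
`Ḡ_V` of the complete graphs on the hyperedges. -/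
theorem MVR.augmented_edges_subset_hypergraph_union
    {V : Type} {ι : Type} [Fintype ι]
    (G : MVR.MixedGraph V) (hG : G.IsMVRChainGraph)
    (C : ι → Set V) (hCne : ∀ h : ι, (C h).Nonempty)
    (hcov : (⋃ h : ι, C h) = Set.univ)
    (hpar : ∀ τ : Set V, G.IsChainComponent τ → ∃ h : ι, τ ∪ G.paSet τ ⊆ C h)
    (u v : V) (huv : u ≠ v) (hcc : G.ColliderConnected u v) :
    ∃ h : ι, u ∈ C h ∧ v ∈ C h :=
  MVR.augmented_edges_subset_hypergraph_union_general G C hpar u v hcc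
end

section
/- Let G be an MVR chain graph on V and let C = {C1,…,CH} be a hypergraph on V such that for every chain component τ of G there is a hyperedge C_h with τ ∪ pa_G(τ) ⊆ C_h. Let Ḡ_V be the undirected graph on V whose edge set is the union over h of the edge sets of the complete graphs on the C_h. Then any junction tree constructed from Ḡ_V (i.e., a junction tree of the cliques of a triangulation of Ḡ_V) is an m-separation tree for G. -/
/-!
On an m-connecting chain every noncollider avoids the separator `S`, and a maximal run of
colliders, together with the two vertices flanking it, lies in `τ ∪ pa_G(τ)` for the chain
component `τ` of the run (an arrowhead at a vertex `c` comes from a parent of `c` or from a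
bidirected neighbour of `c`). That set lies in a hyperedge and so is a clique of `Ḡ_V`;
shortcutting every collider run turns the chain into a walk of `Ḡ_V` that avoids `S`.

For a tree edge `(i, j)` of a junction tree with separator `S = C_i ∩ C_j`, every edge of `Ḡ_V`
lies in a maximal clique of the triangulation, that is, in a node. A node on the `i`-side and a
node on the `j`-side meet only inside `S`, because the tree path between them passes through
`i` and `j`. Hence a walk of `Ḡ_V` avoiding `S` never crosses from one side to the other.
-/

namespace MVR

open SimpleGraph

def avoiding {V : Type*} (H : SimpleGraph V) (S : Set V) : SimpleGraph V where
  Adj x y := H.Adj x y ∧ x ∉ S ∧ y ∉ S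
  symm := ⟨fun _ _ ⟨h, hx, hy⟩ => ⟨h.symm, hy, hx⟩⟩
  loopless := ⟨fun x ⟨h, _, _⟩ => H.loopless.irrefl x h⟩

@[simp] lemma avoiding_adj {V : Type*} {H : SimpleGraph V} {S : Set V} {x y : V} :
    (avoiding H S).Adj x y ↔ H.Adj x y ∧ x ∉ S ∧ y ∉ S := Iff.rfl

lemma reachable_avoiding_of_pairwise {V : Type*} {H : SimpleGraph V} {S s : Set V}
    (hs : s.Pairwise H.Adj) {x y : V} (hx : x ∈ s) (hy : y ∈ s) (hxS : x ∉ S)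
    (hyS : y ∉ S) :
    (avoiding H S).Reachable x y := by
  rcases eq_or_ne x y with rfl | hne
  · rfl
  · exact Adj.reachable (G := avoiding H S) ⟨hs hx hy hne, hxS, hyS⟩

namespace MixedGraph

variable {V : Type*} {G : MixedGraph V}

def chainComponent (G : MixedGraph V) (b : V) : Set V := {w | G.biGraph.Reachable b w}

def chainComponentWithPa (G : MixedGraph V) (b : V) : Set V :=
  G.chainComponent b ∪ G.paSet (G.chainComponent b)

lemma isChainComponent_chainComponent (b : V) : G.IsChainComponent (G.chainComponent b) :=
  ⟨b, rfl⟩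

lemma mem_chainComponentWithPa_self (b : V) : b ∈ G.chainComponentWithPa b :=
  Or.inl (Reachable.refl b)

lemma mem_chainComponentWithPa_of_dir {a b : V} (h : G.dir a b) :
    a ∈ G.chainComponentWithPa b := by
  by_cases ha : a ∈ G.chainComponent b
  · exact Or.inl ha
  · exact Or.inr ⟨ha, b, Reachable.refl b, h⟩

lemma chainComponentWithPa_eq_of_bi {b c : V} (h : G.bi b c) :
    G.chainComponentWithPa b = G.chainComponentWithPa c := by
  have hbc : G.biGraph.Reachable b c := Adj.reachable (G := G.biGraph) h
  have : G.chainComponent b = G.chainComponent c :=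
    Set.ext fun _ => ⟨hbc.symm.trans, hbc.trans⟩
  rw [chainComponentWithPa, chainComponentWithPa, this]

namespace Chain

lemma support_ne_nil {a b : V} (p : G.Chain a b) : p.support ≠ [] := by
  cases p <;> simp [support]

def HeadArrow {a b : V} (p : G.Chain a b) : Prop :=
  ∃ m : Bool × Bool, p.marks[0]? = some m ∧ m.1 = true

def NoncollidersOutside {a b : V} (p : G.Chain a b) (S : Set V) : Prop :=
  ∀ (i : ℕ) (w : V), p.support[i + 1]? = some w → i + 2 < p.support.length →
    ¬ p.ColliderAt i → w ∉ S

lemma MConnecting.noncollidersOutside {a b : V} {p : G.Chain a b} {S : Set V}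
    (h : p.MConnecting S) : p.NoncollidersOutside S :=
  fun i w hw hi => (h i w hw hi).2

-- `p` is a chain whose first step is followed by `q`; stating this through `support` and
-- `marks` lets one lemma serve all three kinds of step.
variable {a b c : V} {p : G.Chain a c} {q : G.Chain b c} {S : Set V}

lemma colliderAt_zero_iff {mL mR : Bool} (hm : p.marks = (mL, mR) :: q.marks) :
    p.ColliderAt 0 ↔ mR = true ∧ q.HeadArrow := by
  simp [ColliderAt, HeadArrow, hm, and_comm]

lemma colliderAt_succ_iff {m : Bool × Bool} (hm : p.marks = m :: q.marks) (i : ℕ) :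
    p.ColliderAt (i + 1) ↔ q.ColliderAt i := by
  simp [ColliderAt, hm]

lemma NoncollidersOutside.tail {m : Bool × Bool} (hs : p.support = a :: q.support)
    (hm : p.marks = m :: q.marks) (hp : p.NoncollidersOutside S) : q.NoncollidersOutside S :=
  fun i w hw hi hnc => hp (i + 1) w (by simpa [hs]) (by simp [hs]; omega)
    (by rwa [colliderAt_succ_iff hm])

lemma notMem_of_not_colliderAt_zero (hs : p.support = a :: q.support)
    (hp : p.NoncollidersOutside S) (hc : c ∉ S) (hnc : ¬ p.ColliderAt 0) : b ∉ S := by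
  cases q with
  | nil => exact hc
  | _ _ q' =>
    have := List.length_pos_of_ne_nil q'.support_ne_nil
    exact hp 0 b (by simp [hs, support]) (by simp [hs, support]; omega) hnc

lemma headArrow_of_mem {mL : Bool} (hs : p.support = a :: q.support)
    (hm : p.marks = (mL, true) :: q.marks) (hp : p.NoncollidersOutside S) (hc : c ∉ S)
    (hb : b ∈ S) : q.HeadArrow :=
  by_contra fun h =>
    notMem_of_not_colliderAt_zero hs hp hc (by simp [colliderAt_zero_iff hm, h]) hb

variable {H : SimpleGraph V}

/-- The vertex `a` is the last vertex outside `S` reached so far; it lies in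
`τ(b) ∪ pa_G(τ(b))` for the current vertex `b`, and `b` itself may lie in `S` only if it is
entered and left through arrowheads, that is, only if it is a collider. -/
theorem reachable_avoiding_of_mem_chainComponentWithPa
    (hH : ∀ b, (G.chainComponentWithPa b).Pairwise H.Adj) {v : V} (hv : v ∉ S)
    (q : G.Chain b v) (hq : q.NoncollidersOutside S) {a : V} (ha : a ∉ S)
    (hab : a ∈ G.chainComponentWithPa b) (hb : b ∈ S → q.HeadArrow) :
    (avoiding H S).Reachable a v := by
  induction q generalizing a with
  | nil =>
    exact reachable_avoiding_of_pairwise (hH _) hab (mem_chainComponentWithPa_self _) ha hv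
  | @fwd b c _ hbc q ih =>
    have hbS : b ∉ S := fun h => by simpa [HeadArrow, marks] using hb h
    exact (reachable_avoiding_of_pairwise (hH b) hab (mem_chainComponentWithPa_self b) ha
      hbS).trans (ih hv (hq.tail rfl rfl) hbS (mem_chainComponentWithPa_of_dir hbc)
        (headArrow_of_mem rfl rfl hq hv))
  | @rev b c _ hcb q ih =>
    have hcS : c ∉ S :=
      notMem_of_not_colliderAt_zero rfl hq hv
        ((colliderAt_zero_iff (p := .rev hcb q) rfl).not.2 (by simp))
    exact (reachable_avoiding_of_pairwise (hH b) hab (mem_chainComponentWithPa_of_dir hcb) ha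
      hcS).trans (ih hv (hq.tail rfl rfl) hcS (mem_chainComponentWithPa_self c) (absurd · hcS))
  | @bid b c _ hbc q ih =>
    exact ih hv (hq.tail rfl rfl) ha (chainComponentWithPa_eq_of_bi hbc ▸ hab)
      (headArrow_of_mem rfl rfl hq hv)

theorem reachable_avoiding (hH : ∀ b, (G.chainComponentWithPa b).Pairwise H.Adj) {u v : V}
    (p : G.Chain u v) (hu : u ∉ S) (hv : v ∉ S) (hp : p.NoncollidersOutside S) :
    (avoiding H S).Reachable u v :=
  reachable_avoiding_of_mem_chainComponentWithPa hH hv p hp hu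
    (mem_chainComponentWithPa_self u) (absurd · hu)

end Chain

end MixedGraph

lemma exists_isMaxClique_superset {W : Type*} {H : SimpleGraph W} {s : Set W}
    (hs : H.IsClique s) : ∃ t, s ⊆ t ∧ IsMaxClique H t := by
  obtain ⟨t, hst, ht⟩ := zorn_subset_nonempty {t | H.IsClique t}
    (fun c hc hchain _ => ⟨⋃₀ c, (isClique_sUnion hchain.directedOn).2 hc,
      fun _ => Set.subset_sUnion_of_mem⟩) s hs
  exact ⟨t, hst, ht.prop, fun t' ht' htt' => (ht.eq_of_subset ht' htt').symm⟩

section JunctionTree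

variable {κ V : Type*} {T : SimpleGraph κ} {Cl : κ → Set V} {i j : κ}

def RunningIntersection (T : SimpleGraph κ) (Cl : κ → Set V) : Prop :=
  ∀ (i j : κ) (p : T.Walk i j), p.IsPath → ∀ k ∈ p.support, Cl i ∩ Cl j ⊆ Cl k

lemma reachable_deleteEdges_or {k m : κ} (hkm : T.Reachable k m)
    (hm : (T.deleteEdges {s(i, j)}).Reachable i m ∨ (T.deleteEdges {s(i, j)}).Reachable j m) :
    (T.deleteEdges {s(i, j)}).Reachable i k ∨ (T.deleteEdges {s(i, j)}).Reachable j k := by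
  obtain ⟨w⟩ := hkm
  induction w with
  | nil => exact hm
  | @cons k l _ hkl _ ih =>
    by_cases he : s(k, l) = s(i, j)
    · rcases Sym2.eq_iff.mp he with ⟨rfl, -⟩ | ⟨rfl, -⟩
      · exact Or.inl .rfl
      · exact Or.inr .rfl
    · have hlk : (T.deleteEdges {s(i, j)}).Adj l k :=
        deleteEdges_adj.2 ⟨hkl.symm, by simpa [Sym2.eq_swap] using he⟩
      exact (ih hm).imp (·.trans hlk.reachable) (·.trans hlk.reachable)

lemma RunningIntersection.inter_subset (hCl : RunningIntersection T Cl) (hT : T.Connected)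
    (hij : T.IsBridge s(i, j)) {k k' : κ} (hk : (T.deleteEdges {s(i, j)}).Reachable i k)
    (hk' : (T.deleteEdges {s(i, j)}).Reachable j k') : Cl k ∩ Cl k' ⊆ Cl i ∩ Cl j := by
  obtain ⟨p, hp⟩ := (hT.preconnected k k').exists_isPath
  have hmem : s(i, j) ∈ p.edges :=
    p.mem_edges_of_not_reachable_deleteEdges fun h => hij (hk.trans (h.trans hk'.symm))
  exact fun x hx => ⟨hCl k k' p hp i (p.fst_mem_support_of_mem_edges hmem) hx,
    hCl k k' p hp j (p.snd_mem_support_of_mem_edges hmem) hx⟩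

lemma RunningIntersection.exists_mem_of_reachable_avoiding (hCl : RunningIntersection T Cl)
    (hT : T.Connected) (hij : T.IsBridge s(i, j)) {K : SimpleGraph V}
    (hK : ∀ x y, K.Adj x y → ∃ k, x ∈ Cl k ∧ y ∈ Cl k) {x y : V}
    (hxy : (avoiding K (Cl i ∩ Cl j)).Reachable x y)
    (hx : ∃ k, (T.deleteEdges {s(i, j)}).Reachable i k ∧ x ∈ Cl k) :
    ∃ k, (T.deleteEdges {s(i, j)}).Reachable i k ∧ y ∈ Cl k := by
  obtain ⟨w⟩ := hxy
  induction w with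
  | nil => exact hx
  | @cons x z _ hxz _ ih =>
    obtain ⟨hK', hxS, -⟩ := avoiding_adj.1 hxz
    obtain ⟨k, hk, hxk⟩ := hx
    obtain ⟨k', hxk', hzk'⟩ := hK x z hK'
    refine ih ⟨k', ?_, hzk'⟩
    exact (reachable_deleteEdges_or (j := j) (hT.preconnected k' i) (Or.inl .rfl)).resolve_right
      fun hk' => hxS (hCl.inter_subset hT hij hk hk' ⟨hxk, hxk'⟩)

lemma RunningIntersection.not_reachable_avoiding (hCl : RunningIntersection T Cl)
    (hT : T.Connected) (hij : T.IsBridge s(i, j)) {K : SimpleGraph V}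
    (hK : ∀ x y, K.Adj x y → ∃ k, x ∈ Cl k ∧ y ∈ Cl k) {k₁ k₂ : κ} {x y : V}
    (hk₁ : (T.deleteEdges {s(i, j)}).Reachable i k₁) (hx : x ∈ Cl k₁)
    (hk₂ : (T.deleteEdges {s(i, j)}).Reachable j k₂) (hy : y ∈ Cl k₂)
    (hyS : y ∉ Cl i ∩ Cl j) :
    ¬ (avoiding K (Cl i ∩ Cl j)).Reachable x y := fun hxy => by
  obtain ⟨k, hk, hyk⟩ := hCl.exists_mem_of_reachable_avoiding hT hij hK hxy ⟨k₁, hk₁, hx⟩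
  exact hyS (hCl.inter_subset hT hij hk hk₂ ⟨hyk, hy⟩)

end JunctionTree

end MVR

theorem MVR.junctionTree_of_hypergraph_isMSepTree_general
    {V : Type} {ι : Type}
    (G : MVR.MixedGraph V)
    (C : ι → Set V)
    (hpar : ∀ τ : Set V, G.IsChainComponent τ → ∃ h : ι, τ ∪ G.paSet τ ⊆ C h)
    (H : SimpleGraph V)
    (hH : ∀ u v : V, H.Adj u v ↔ u ≠ v ∧ ∃ h : ι, u ∈ C h ∧ v ∈ C h)
    {κ : Type} (T : SimpleGraph κ) (Cl : κ → Set V)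
    (hJT : MVR.IsJunctionTreeFor T Cl H) :
    G.IsMSepTree T Cl := by
  obtain ⟨hT, Ht, hHt, -, -, -, hmax, hCl⟩ := hJT
  have hnode : ∀ s, Ht.IsClique s → ∃ k, s ⊆ Cl k := fun s hs => by
    obtain ⟨t, hst, ht⟩ := MVR.exists_isMaxClique_superset hs
    obtain ⟨k, rfl⟩ := hmax t ht
    exact ⟨k, hst⟩
  have hedge : ∀ x y, H.Adj x y → ∃ k, x ∈ Cl k ∧ y ∈ Cl k := fun x y hxy => by
    obtain ⟨k, hk⟩ := hnode {x, y} (SimpleGraph.isClique_pair.2 fun _ => hHt hxy)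
    exact ⟨k, hk (by simp), hk (by simp)⟩
  have hcomp : ∀ b, (G.chainComponentWithPa b).Pairwise H.Adj := fun b x hx y hy hxy => by
    obtain ⟨h, hsub⟩ := hpar _ (G.isChainComponent_chainComponent b)
    exact (hH x y).2 ⟨hxy, h, hsub hx, hsub hy⟩
  refine ⟨hT, Set.eq_univ_of_forall fun x => ?_, fun i j hij => ?_⟩
  · obtain ⟨k, hk⟩ := hnode {x} (Set.pairwise_singleton x Ht.Adj)
    exact Set.mem_iUnion.2 ⟨k, hk rfl⟩
  · rintro u ⟨hu, huS⟩ v ⟨hv, hvS⟩ p - hp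
    obtain ⟨k₁, hk₁, hu⟩ := Set.mem_iUnion₂.1 hu
    obtain ⟨k₂, hk₂, hv⟩ := Set.mem_iUnion₂.1 hv
    exact MVR.RunningIntersection.not_reachable_avoiding hCl hT.1
      (SimpleGraph.isAcyclic_iff_forall_adj_isBridge.1 hT.2 hij) hedge hk₁ hu hk₂ hv hvS
      (p.reachable_avoiding hcomp huS hvS hp.noncollidersOutside)

/-- Let `C` be a hypergraph on `V` such that every chain component `τ` of
the MVR chain graph `G` together with `pa_G(τ)` is contained in some hyperedge, and let
`H = Ḡ_V` be the union of the complete graphs on the hyperedges.  Then any junction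
tree constructed from `H` is an m-separation tree for `G`. -/
theorem MVR.junctionTree_of_hypergraph_isMSepTree
    {V : Type} [Fintype V] {ι : Type} [Fintype ι]
    (G : MVR.MixedGraph V) (hG : G.IsMVRChainGraph)
    (C : ι → Set V) (hCne : ∀ h : ι, (C h).Nonempty)
    (hcov : (⋃ h : ι, C h) = Set.univ)
    (hpar : ∀ τ : Set V, G.IsChainComponent τ → ∃ h : ι, τ ∪ G.paSet τ ⊆ C h)
    (H : SimpleGraph V)
    (hH : ∀ u v : V, H.Adj u v ↔ u ≠ v ∧ ∃ h : ι, u ∈ C h ∧ v ∈ C h)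
    {κ : Type} [Fintype κ] (T : SimpleGraph κ) (Cl : κ → Set V)
    (hJT : MVR.IsJunctionTreeFor T Cl H) :
    G.IsMSepTree T Cl :=
  MVR.junctionTree_of_hypergraph_isMSepTree_general G C hpar H hH T Cl hJT
end

section
/- Let u and v be vertices of an MVR chain graph G and let ρ be a chain from u to v whose vertex set is not contained in An({u, v}). Then ρ contains a collider whose middle vertex w satisfies w ∉ an({u, v}) and, moreover, no vertex of which w is an ancestor lies in an({u, v}). -/
/-!
`An({u, v})` is closed under parents, so an edge of `ρ` joining a vertex of `An({u, v})` to
one outside it carries an arrowhead at the outside vertex. A stretch of `ρ` outside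
`An({u, v})` is thus entered and left through arrowheads, and such a stretch contains a
collider.
-/

namespace MVR.MixedGraph

variable {V : Type*} {G : MixedGraph V}

def IsAncestral (G : MixedGraph V) (S : Set V) : Prop :=
  ∀ ⦃x y : V⦄, G.dir x y → y ∈ S → x ∈ S

lemma mem_anc_of_isAncestor {X : Set V} {w x : V} (hwx : G.IsAncestor w x)
    (hx : x ∈ G.anc X) : w ∈ G.anc X :=
  let ⟨z, hz, hxz⟩ := hx
  ⟨z, hz, hwx.trans hxz⟩

lemma isAncestral_Anc (X : Set V) : G.IsAncestral (G.Anc X) := by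
  rintro x y hxy (⟨z, hz, hyz⟩ | hy)
  · exact Or.inl ⟨z, hz, .head hxy hyz⟩
  · exact Or.inl ⟨y, hy, .single hxy⟩

namespace Chain

lemma support_length {a c : V} (q : G.Chain a c) :
    q.support.length = q.marks.length + 1 := by
  induction q <;> simp [support, marks, *]

lemma support_getElem?_zero {a c : V} (q : G.Chain a c) : q.support[0]? = some a := by
  cases q <;> simp [support]

def HasColliderNotIn {a c : V} (S : Set V) (q : G.Chain a c) : Prop :=
  ∃ i w, q.support[i + 1]? = some w ∧ i + 2 < q.support.length ∧ q.ColliderAt i ∧ w ∉ S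

def StartsWithArrowhead {a c : V} (q : G.Chain a c) : Prop :=
  ∃ m : Bool × Bool, q.marks[0]? = some m ∧ m.1 = true

variable {S : Set V} {a b c : V} {p : G.Chain a c} {q : G.Chain b c} {m : Bool × Bool}

lemma HasColliderNotIn.cons (hs : p.support = a :: q.support) (hm : p.marks = m :: q.marks)
    (hq : q.HasColliderNotIn S) : p.HasColliderNotIn S := by
  obtain ⟨i, w, hw, hlen, ⟨m₁, m₂, h₁, h₂, hm₁, hm₂⟩, hwS⟩ := hq
  refine ⟨i + 1, w, ?_, ?_, ⟨m₁, m₂, ?_, ?_, hm₁, hm₂⟩, hwS⟩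
  · rwa [hs, List.getElem?_cons_succ]
  · rw [hs, List.length_cons]; omega
  · rwa [hm, List.getElem?_cons_succ]
  · rwa [hm, List.getElem?_cons_succ]

lemma hasColliderNotIn_of_startsWithArrowhead (hs : p.support = a :: q.support)
    (hm : p.marks = m :: q.marks) (hm₂ : m.2 = true) (hb : b ∉ S)
    (hq : q.StartsWithArrowhead) : p.HasColliderNotIn S := by
  obtain ⟨m', hm', hm'₁⟩ := hq
  have hlen : 0 < q.marks.length := (List.getElem?_eq_some_iff.mp hm').1
  refine ⟨0, b, ?_, ?_, ⟨m, m', ?_, ?_, hm₂, hm'₁⟩, hb⟩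
  · simp [hs, q.support_getElem?_zero]
  · simp only [hs, List.length_cons, q.support_length]; omega
  · simp [hm]
  · simpa [hm] using hm'

lemma hasColliderNotIn_or_startsWithArrowhead (hS : G.IsAncestral S) (q : G.Chain a c)
    (hc : c ∈ S) (hq : ∃ w ∈ q.support, w ∉ S) :
    q.HasColliderNotIn S ∨ a ∉ S ∧ q.StartsWithArrowhead := by
  induction q with
  | nil a => exact absurd hc (by simpa [support] using hq)
  | @fwd a b c h q ih =>
    have hb : a ∉ S → b ∉ S := fun ha hb => ha (hS h hb)
    have hq' : ∃ w ∈ q.support, w ∉ S := by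
      by_cases ha : a ∈ S
      · simpa [support, ha] using hq
      · exact ⟨b, List.mem_of_getElem? q.support_getElem?_zero, hb ha⟩
    rcases ih hc hq' with hcol | ⟨hb', hq''⟩
    · exact .inl (hcol.cons rfl rfl)
    · exact .inl (hasColliderNotIn_of_startsWithArrowhead rfl rfl rfl hb' hq'')
  | @rev a b c h q ih =>
    by_cases ha : a ∈ S
    · have hq' : ∃ w ∈ q.support, w ∉ S := by simpa [support, ha] using hq
      rcases ih hc hq' with hcol | ⟨hb, -⟩
      · exact .inl (hcol.cons rfl rfl)
      · exact absurd (hS h ha) hb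
    · exact .inr ⟨ha, _, rfl, rfl⟩
  | @bid a b c h q ih =>
    by_cases ha : a ∈ S
    · have hq' : ∃ w ∈ q.support, w ∉ S := by simpa [support, ha] using hq
      rcases ih hc hq' with hcol | ⟨hb, hq''⟩
      · exact .inl (hcol.cons rfl rfl)
      · exact .inl (hasColliderNotIn_of_startsWithArrowhead rfl rfl rfl hb hq'')
    · exact .inr ⟨ha, _, rfl, rfl⟩

theorem hasColliderNotIn_of_isAncestral (hS : G.IsAncestral S) (q : G.Chain a c)
    (ha : a ∈ S) (hc : c ∈ S) (hq : ∃ w ∈ q.support, w ∉ S) : q.HasColliderNotIn S :=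
  (hasColliderNotIn_or_startsWithArrowhead hS q hc hq).resolve_right fun h => h.1 ha

end Chain

end MVR.MixedGraph

theorem MVR.exists_collider_outside_anc_general
    {V : Type} (G : MVR.MixedGraph V)
    (u v : V) (p : G.Chain u v)
    (hρ : ¬ ∀ w ∈ p.support, w ∈ G.Anc {u, v}) :
    ∃ (i : ℕ) (w : V), p.support[i + 1]? = some w ∧ i + 2 < p.support.length ∧
      p.ColliderAt i ∧ w ∉ G.anc {u, v} ∧
      ∀ x : V, G.IsAncestor w x → x ∉ G.anc {u, v} := by
  push Not at hρ
  obtain ⟨i, w, hw, hlen, hcol, hwS⟩ := p.hasColliderNotIn_of_isAncestral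
    (MixedGraph.isAncestral_Anc _) (Or.inr (by simp)) (Or.inr (by simp)) hρ
  have hwanc : w ∉ G.anc {u, v} := fun h => hwS (Or.inl h)
  exact ⟨i, w, hw, hlen, hcol, hwanc,
    fun x hwx hx => hwanc (MixedGraph.mem_anc_of_isAncestor hwx hx)⟩

/-- If `ρ` is a chain from `u` to `v` in an MVR chain graph whose vertex
set is not contained in `An({u, v})`, then `ρ` contains a collider whose middle vertex
`w` satisfies `w ∉ an({u, v})` and no vertex of which `w` is an ancestor lies in
`an({u, v})`. -/
theorem MVR.exists_collider_outside_anc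
    {V : Type} (G : MVR.MixedGraph V) (hG : G.IsMVRChainGraph)
    (u v : V) (p : G.Chain u v) (hp : p.support.Nodup)
    (hρ : ¬ ∀ w ∈ p.support, w ∈ G.Anc {u, v}) :
    ∃ (i : ℕ) (w : V), p.support[i + 1]? = some w ∧ i + 2 < p.support.length ∧
      p.ColliderAt i ∧ w ∉ G.anc {u, v} ∧
      ∀ x : V, G.IsAncestor w x → x ∉ G.anc {u, v} :=
  MVR.exists_collider_outside_anc_general G u v p hρ
end
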